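/- Let q₀ and q₁ be probability distributions on a finite set S, let p ∈ [0,1], and let q = p·q₀ + (1-p)·q₁. For m ∈ S with q(m) > 0, let r(m) = p·q₀(m)/q(m). Then the mutual information between the source bit and the observation satisfies I = H(p) - Σ_m q(m)·H(r(m)) ≥ H(p) - 2√(p(1-p))·Σ_m √(q₀(m)·q₁(m)). -/

import Mathlib

/-- Binary entropy in bits, with the convention `0 * logb 2 0 = 0`. -/
noncomputable def binH (p : ℝ) : ℝ := -(p * Real.logb 2 p) - (1 - p) * Real.logb 2 (1 - p)

/-!
Each summand is `(a + b) H(a / (a + b))` with `a = p q₀(m)`, `b = (1 - p) q₁(m)`, so it suffices to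
show `H(x) ≤ 2 √(x (1 - x))`, i.e. `h(x) ≤ 2 log 2 · √(x (1 - x))` for the entropy `h` in nats.
Two elementary bounds cover `[0, 1]`: `log s ≥ (s - s⁻¹) / 2` for `s ≤ 1` gives
`h(x) ≤ √(x (1 - x)) (√x + √(1 - x))`, sharp at the endpoints, and the binary Pinsker inequality
`h(x) ≤ log 2 - 2 (x - 1/2)²`, sharp at `1/2`. In terms of `g = √(x (1 - x))` the first suffices
when `g ≤ log 2 - 1/2` and the second when `g ≥ log 2 - 1/2`.
-/

open Real Set

namespace Real

lemma sub_inv_le_two_mul_log {s : ℝ} (hs0 : 0 < s) (hs1 : s ≤ 1) : s - s⁻¹ ≤ 2 * log s := by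
  have h := sinh_le_self_iff.2 (log_nonpos hs0.le hs1)
  rw [sinh_log hs0] at h
  linarith

lemma negMulLog_sq_le {s : ℝ} (hs0 : 0 ≤ s) (hs1 : s ≤ 1) :
    negMulLog (s ^ 2) ≤ s * (1 - s ^ 2) := by
  rcases hs0.eq_or_lt with rfl | hs0
  · simp
  have hlog := sub_inv_le_two_mul_log hs0 hs1
  calc negMulLog (s ^ 2) = -(s ^ 2 * (2 * log s)) := by
        rw [negMulLog, log_pow]; push_cast; ring
    _ ≤ -(s ^ 2 * (s - s⁻¹)) := by gcongr
    _ = s * (1 - s ^ 2) := by field_simp; ring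

lemma binEntropy_le_sqrt_mul_sqrt_mul_add {x : ℝ} (hx0 : 0 ≤ x) (hx1 : x ≤ 1) :
    binEntropy x ≤ √x * √(1 - x) * (√x + √(1 - x)) := by
  have hx : √x ^ 2 = x := sq_sqrt hx0
  have hx' : √(1 - x) ^ 2 = 1 - x := sq_sqrt (by linarith)
  have h := negMulLog_sq_le (sqrt_nonneg x) (sqrt_le_one.2 hx1)
  have h' := negMulLog_sq_le (sqrt_nonneg (1 - x)) (sqrt_le_one.2 (by linarith))
  rw [hx] at h
  rw [hx'] at h'
  calc binEntropy x = negMulLog x + negMulLog (1 - x) :=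
        binEntropy_eq_negMulLog_add_negMulLog_one_sub x
    _ ≤ √x * (1 - x) + √(1 - x) * (1 - (1 - x)) := add_le_add h h'
    _ = √x * √(1 - x) * (√x + √(1 - x)) := by linear_combination (-√x) * hx' - √(1 - x) * hx

lemma concaveOn_binEntropy_add_sq :
    ConcaveOn ℝ (Icc 0 1) fun x ↦ binEntropy x + 2 * (x - 2⁻¹) ^ 2 := by
  refine concaveOn_of_hasDerivWithinAt2_nonpos (convex_Icc 0 1)
    (f' := fun x ↦ log (1 - x) - log x + 4 * (x - 2⁻¹))
    (f'' := fun x ↦ -(1 - x)⁻¹ - x⁻¹ + 4) (by fun_prop) ?_ ?_ ?_ <;>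
    rw [interior_Icc] <;> rintro x ⟨hx0, hx1⟩
  · have h2 : HasDerivAt (fun x : ℝ ↦ 2 * (x - 2⁻¹) ^ 2) (4 * (x - 2⁻¹)) x :=
      ((((hasDerivAt_id' x).sub_const 2⁻¹).fun_pow 2).const_mul 2).congr_deriv (by norm_num; ring)
    exact ((hasDerivAt_binEntropy hx0.ne' hx1.ne).add h2).hasDerivWithinAt
  · have hlog1 : HasDerivAt (fun x : ℝ ↦ log (1 - x)) (-(1 - x)⁻¹) x := by
      convert ((hasDerivAt_id' x).const_sub 1).log (by linarith) using 1
      ring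
    have h4 : HasDerivAt (fun x : ℝ ↦ 4 * (x - 2⁻¹)) 4 x := by
      simpa using ((hasDerivAt_id' x).sub_const 2⁻¹).const_mul 4
    exact ((hlog1.sub (hasDerivAt_log hx0.ne')).add h4).hasDerivWithinAt
  · have h1x : 0 < 1 - x := by linarith
    have : 4 ≤ (1 - x)⁻¹ + x⁻¹ := by
      rw [inv_add_inv h1x.ne' hx0.ne', le_div_iff₀ (by positivity)]
      nlinarith [sq_nonneg (2 * x - 1)]
    linarith

lemma binEntropy_le_log_two_sub_sq {x : ℝ} (hx0 : 0 ≤ x) (hx1 : x ≤ 1) :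
    binEntropy x ≤ log 2 - 2 * (x - 2⁻¹) ^ 2 := by
  -- the concave function is symmetric about `1/2`, so its value there dominates
  have h := concaveOn_binEntropy_add_sq.2 ⟨hx0, hx1⟩ ⟨sub_nonneg.2 hx1, sub_le_self 1 hx0⟩
    (by norm_num : (0 : ℝ) ≤ 2⁻¹) (by norm_num : (0 : ℝ) ≤ 2⁻¹) (by norm_num)
  have hmid : 2⁻¹ * x + 2⁻¹ * (1 - x) = 2⁻¹ := by ring
  have hsym : (1 - x - 2⁻¹) ^ 2 = (x - 2⁻¹) ^ 2 := by ring
  simp only [smul_eq_mul, hmid, binEntropy_one_sub, hsym, binEntropy_two_inv, sub_self] at h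
  linarith

lemma binEntropy_le_two_log_two_mul_sqrt {x : ℝ} (hx0 : 0 ≤ x) (hx1 : x ≤ 1) :
    binEntropy x ≤ 2 * log 2 * √(x * (1 - x)) := by
  have hL : 2⁻¹ ≤ log 2 := by linarith [log_two_gt_d9]
  rw [sqrt_mul hx0]
  set g := √x * √(1 - x) with hg
  have hg0 : 0 ≤ g := by positivity
  have hx : √x ^ 2 = x := sq_sqrt hx0
  have hx' : √(1 - x) ^ 2 = 1 - x := sq_sqrt (by linarith)
  have hg_sq : g ^ 2 = x * (1 - x) := by rw [hg, mul_pow, hx, hx']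
  rcases le_total g (log 2 - 2⁻¹) with hg_le | hg_ge
  · have hsum_sq : (√x + √(1 - x)) ^ 2 ≤ (2 * log 2) ^ 2 := by nlinarith
    have hsum : √x + √(1 - x) ≤ 2 * log 2 :=
      (pow_le_pow_iff_left₀ (by positivity) (by positivity) two_ne_zero).1 hsum_sq
    calc binEntropy x ≤ g * (√x + √(1 - x)) := binEntropy_le_sqrt_mul_sqrt_mul_add hx0 hx1
      _ ≤ g * (2 * log 2) := by gcongr
      _ = 2 * log 2 * g := by ring
  · have hg_half : g ≤ 2⁻¹ := by nlinarith [sq_nonneg (2 * x - 1)]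
    calc binEntropy x ≤ log 2 - 2 * (x - 2⁻¹) ^ 2 := binEntropy_le_log_two_sub_sq hx0 hx1
      _ = log 2 - 2⁻¹ + 2 * g ^ 2 := by rw [hg_sq]; ring
      _ ≤ 2 * log 2 * g := by nlinarith [mul_nonneg (sub_nonneg.2 hg_half) (sub_nonneg.2 hg_ge)]

end Real

lemma binH_eq_binEntropy_div_log_two (x : ℝ) : binH x = binEntropy x / log 2 := by
  rw [binEntropy_eq_negMulLog_add_negMulLog_one_sub, binH, negMulLog, negMulLog, logb, logb]
  ring

lemma binH_le_two_mul_sqrt {x : ℝ} (hx0 : 0 ≤ x) (hx1 : x ≤ 1) : binH x ≤ 2 * √(x * (1 - x)) := by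
  rw [binH_eq_binEntropy_div_log_two, div_le_iff₀ (log_pos one_lt_two)]
  linarith [binEntropy_le_two_log_two_mul_sqrt hx0 hx1]

lemma add_mul_binH_div_add_le {a b : ℝ} (ha : 0 ≤ a) (hb : 0 ≤ b) :
    (a + b) * binH (a / (a + b)) ≤ 2 * √(a * b) := by
  rcases (add_nonneg ha hb).eq_or_lt with hab | hab
  · rw [← hab, zero_mul]
    positivity
  have hprod : a / (a + b) * (1 - a / (a + b)) = a * b / (a + b) ^ 2 := by
    field_simp; ring
  calc (a + b) * binH (a / (a + b))
      ≤ (a + b) * (2 * √(a / (a + b) * (1 - a / (a + b)))) := by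
        gcongr
        exact binH_le_two_mul_sqrt (by positivity) ((div_le_one hab).2 (le_add_of_nonneg_right hb))
    _ = 2 * √(a * b) := by
        rw [hprod, sqrt_div' _ (sq_nonneg _), sqrt_sq hab.le]
        field_simp

theorem mutual_info_ge_entropy_sub_bhattacharyya_general {S : Type} [Fintype S]
    (q0 q1 : S → ℝ) (h0 : ∀ m, 0 ≤ q0 m) (h1 : ∀ m, 0 ≤ q1 m)
    (p : ℝ) (hp : p ∈ Set.Icc (0:ℝ) 1) :
    binH p - ∑ m, (p * q0 m + (1-p) * q1 m) *
        binH (p * q0 m / (p * q0 m + (1-p) * q1 m)) ≥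
      binH p - 2 * Real.sqrt (p * (1-p)) * ∑ m, Real.sqrt (q0 m * q1 m) := by
  obtain ⟨hp0, hp1⟩ := hp
  have hp1' : 0 ≤ 1 - p := sub_nonneg.2 hp1
  refine sub_le_sub_left ?_ _
  rw [mul_assoc, Finset.mul_sum, Finset.mul_sum]
  refine Finset.sum_le_sum fun m _ ↦ ?_
  calc _ ≤ 2 * √(p * q0 m * ((1 - p) * q1 m)) :=
        add_mul_binH_div_add_le (mul_nonneg hp0 (h0 m)) (mul_nonneg hp1' (h1 m))
    _ = 2 * (√(p * (1 - p)) * √(q0 m * q1 m)) := by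
        rw [← sqrt_mul (mul_nonneg hp0 hp1')]
        congr 2
        ring

theorem mutual_info_ge_entropy_sub_bhattacharyya {S : Type} [Fintype S]
    (q0 q1 : S → ℝ) (h0 : ∀ m, 0 ≤ q0 m) (h1 : ∀ m, 0 ≤ q1 m)
    (hs0 : ∑ m, q0 m = 1) (hs1 : ∑ m, q1 m = 1)
    (p : ℝ) (hp : p ∈ Set.Icc (0:ℝ) 1) :
    binH p - ∑ m, (p * q0 m + (1-p) * q1 m) *
        binH (p * q0 m / (p * q0 m + (1-p) * q1 m)) ≥
      binH p - 2 * Real.sqrt (p * (1-p)) * ∑ m, Real.sqrt (q0 m * q1 m) :=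
  mutual_info_ge_entropy_sub_bhattacharyya_general q0 q1 h0 h1 p hp
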